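/- Let α ∈ ω+1, let M be a model of Univ_α, let A be a finite set of vertices of M with A ≤* M, and let B ∈ K_α with A ⊆ B and A ≤* B. Then there exists an embedding f of the graph B into M fixing A pointwise such that the image f(B) is closed in M (f(B) ≤* M). In particular, every model of Univ_α is ultra-homogeneous. -/

import Mathlib

open SimpleGraph

/-- The predimension of a finite set `A` of vertices: `|A| - e(A)`, where `e(A)` is the
number of edges of the induced subgraph on `A`. -/
noncomputable def delta {V : Type*} (G : SimpleGraph V) (A : Finset V) : ℤ :=
  (A.card : ℤ) - (Nat.card (G.induce (A : Set V)).edgeSet : ℤ)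

/-- `A` is closed in `B` (`A ≤* B`): `A ⊆ B` and `δ(C) > δ(A)` for every finite `C` with
`A ⊊ C ⊆ B`. -/
def Closed {V : Type*} (G : SimpleGraph V) (A B : Finset V) : Prop :=
  A ⊆ B ∧ ∀ C : Finset V, A ⊂ C → C ⊆ B → delta G A < delta G C

/-- `A` is weakly closed in `B` (`A ≤ B`). -/
def WClosed {V : Type*} (G : SimpleGraph V) (A B : Finset V) : Prop :=
  A ⊆ B ∧ ∀ C : Finset V, A ⊆ C → C ⊆ B → delta G A ≤ delta G C

/-- `A ≤* M` : `A` is closed in every finite superset inside the graph. -/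
def ClosedIn {V : Type*} (G : SimpleGraph V) (A : Finset V) : Prop :=
  ∀ B : Finset V, A ⊆ B → Closed G A B

def WClosedIn {V : Type*} (G : SimpleGraph V) (A : Finset V) : Prop :=
  ∀ B : Finset V, A ⊆ B → WClosed G A B

/-- `(A,B)` is a minimal pair. -/
def MinPair {V : Type*} (G : SimpleGraph V) (A B : Finset V) : Prop :=
  A ⊆ B ∧ (∀ C : Finset V, A ⊆ C → C ⊂ B → Closed G A C) ∧ ¬ Closed G A B

def WMinPair {V : Type*} (G : SimpleGraph V) (A B : Finset V) : Prop :=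
  A ⊆ B ∧ (∀ C : Finset V, A ⊆ C → C ⊂ B → WClosed G A C) ∧ ¬ WClosed G A B

/-- `B` is an intrinsic extension of `A`. -/
def IntrinsicExt {V : Type*} (G : SimpleGraph V) (A B : Finset V) : Prop :=
  A ⊆ B ∧ ∀ C : Finset V, A ⊆ C → C ⊂ B → ¬ Closed G C B

def WIntrinsicExt {V : Type*} (G : SimpleGraph V) (A B : Finset V) : Prop :=
  A ⊆ B ∧ ∀ C : Finset V, A ⊆ C → C ⊂ B → ¬ WClosed G C B

/-- The closure `cl*_M(N)`. -/
def clStar {V : Type*} (G : SimpleGraph V) (N : Set V) : Set V :=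
  {b | ∃ A E : Finset V, (A : Set V) ⊆ N ∧ IntrinsicExt G A E ∧ b ∈ E}

/-- The weak closure `cl_M(N)`. -/
def clWeak {V : Type*} (G : SimpleGraph V) (N : Set V) : Set V :=
  {b | ∃ A E : Finset V, (A : Set V) ⊆ N ∧ WIntrinsicExt G A E ∧ b ∈ E}

/-- Membership of the finite induced subgraph on `A` in the class `K_α`, for
`α ∈ ω + 1` (coded as `α : ℕ∞`, where `⊤` codes `ω`):
* every nonempty subset has positive predimension (i.e. it is a forest); and
* if `α = n` with `1 ≤ n < ω`: no vertex having at least `n + 2` neighbours in `A` is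
  the starting point of a path of length `2n + 1` inside `A`;
* if `α = 0`: every vertex has at most `3` neighbours in `A`;
* if `α = ω`: no further condition. -/
def InK {V : Type*} (α : ℕ∞) (G : SimpleGraph V) (A : Finset V) : Prop :=
  (∀ S : Finset V, S ⊆ A → S.Nonempty → 0 < delta G S) ∧
  ∀ n : ℕ, α = (n : ℕ∞) →
    if n = 0 then
      ∀ a ∈ A, ∀ s : Finset V, s ⊆ A → (∀ b ∈ s, G.Adj a b) → s.card ≤ 3
    else
      ∀ a ∈ A, (∃ s : Finset V, s ⊆ A ∧ (∀ b ∈ s, G.Adj a b) ∧ n + 2 ≤ s.card) →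
        ¬ ∃ (y : V) (p : G.Walk a y),
            p.IsPath ∧ p.length = 2 * n + 1 ∧ ∀ v ∈ p.support, v ∈ A

/-- `G` is (semantically) a model of the theory `Univ_α` (`α ∈ ω + 1`, coded as
`α : ℕ∞` with `⊤` coding `ω`): the edge relation is symmetric and irreflexive (it is
a simple graph) with no cycle of any finite length; the defining degree/path axiom of
`K_α` holds; and for every finite graph `H ∈ K_α` (with `|H| = m`) the sentence
`∃x̄(diag_H(x̄) ∧ γ*_m(x̄))` holds, i.e. there is an induced copy of `H` in `G` no
vertex of which has a neighbour outside the copy. -/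
def ModelsUniv {V : Type*} (α : ℕ∞) (G : SimpleGraph V) : Prop :=
  G.IsAcyclic ∧
  (∀ n : ℕ, α = (n : ℕ∞) →
    if n = 0 then
      ∀ a : V, ∀ s : Finset V, (∀ b ∈ s, G.Adj a b) → s.card ≤ 3
    else
      ∀ a : V, (∃ s : Finset V, (∀ b ∈ s, G.Adj a b) ∧ n + 2 ≤ s.card) →
        ¬ ∃ (y : V) (p : G.Walk a y), p.IsPath ∧ p.length = 2 * n + 1) ∧
  ∀ (k : ℕ) (H : SimpleGraph (Fin k)), InK α H Finset.univ →
    ∃ f : Fin k → V, Function.Injective f ∧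
      (∀ u v : Fin k, H.Adj u v ↔ G.Adj (f u) (f v)) ∧
      ∀ y : V, y ∉ Set.range f → ∀ u : Fin k, ¬ G.Adj (f u) y

/-!
Closedness is local here: if `v ∉ A` is adjacent to `a ∈ A`, then `δ(A ∪ {v}) ≤ δ(A)`, so
`A ≤* M` means that no vertex outside `A` has a neighbour in `A`, and likewise `A ≤* B` means
that `j(A)` has no neighbours in `B \ j(A)`. Conversely, in a forest a finite set without outside
neighbours is closed, because `δ` is additive over non-adjacent disjoint sets and positive on
nonempty ones.

The universality axiom, applied to `#A + 1` disjoint copies of `B` (again in `K_α`, since the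
conditions of `K_α` are checked inside connected pieces), gives a copy of `B` in `M` that has no
outside neighbours and misses `A`. Mapping `B \ j(A)` into this copy and `j(A)` back onto `A`
gives the required embedding: its image is a union of two sets without outside neighbours.
-/

open Finset

namespace SimpleGraph

variable {V : Type*}

lemma card_edgeSet_induce (G : SimpleGraph V) [DecidableRel G.Adj] (S : Finset V) :
    Nat.card (G.induce (S : Set V)).edgeSet = #{e ∈ S.sym2 | e ∈ G.edgeSet} := by
  have himage : Sym2.map Subtype.val '' (G.induce (S : Set V)).edgeSet =
      ↑({e ∈ S.sym2 | e ∈ G.edgeSet} : Finset (Sym2 V)) := by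
    ext e
    constructor
    · rintro ⟨e', he', rfl⟩
      induction e' with
      | _ x y => simpa using he'
    · induction e with
      | _ x y =>
        intro he
        simp only [coe_filter, Set.mem_ofPred_eq, mem_sym2_iff, Sym2.mem_iff, forall_eq_or_imp,
          forall_eq, mem_edgeSet] at he
        exact ⟨s(⟨x, he.1.1⟩, ⟨y, he.1.2⟩), he.2, rfl⟩
  rw [Nat.card_coe_set_eq, ← Set.ncard_coe_finset, ← himage,
    Set.ncard_image_of_injective _ (Sym2.map.injective Subtype.val_injective)]

end SimpleGraph

section Predimension

variable {V V' : Type*} (G : SimpleGraph V)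

lemma delta_eq_card_sub_card_edges [DecidableRel G.Adj] (S : Finset V) :
    delta G S = #S - #{e ∈ S.sym2 | e ∈ G.edgeSet} := by
  rw [delta, card_edgeSet_induce]

lemma delta_union_of_forall_not_adj [DecidableEq V] {A B : Finset V} (hAB : Disjoint A B)
    (h : ∀ a ∈ A, ∀ b ∈ B, ¬ G.Adj a b) :
    delta G (A ∪ B) = delta G A + delta G B := by
  classical
  have hedges : {e ∈ (A ∪ B).sym2 | e ∈ G.edgeSet} =
      {e ∈ A.sym2 | e ∈ G.edgeSet} ∪ {e ∈ B.sym2 | e ∈ G.edgeSet} := by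
    ext e
    induction e with
    | _ x y =>
      have hx := h x; have hy := h y
      simp only [mem_union, mem_filter, mem_sym2_iff, Sym2.mem_iff, forall_eq_or_imp, forall_eq,
        mem_edgeSet]
      grind [G.adj_symm]
  have hdisj : Disjoint {e ∈ A.sym2 | e ∈ G.edgeSet} {e ∈ B.sym2 | e ∈ G.edgeSet} := by
    refine disjoint_filter_filter (disjoint_left.2 fun e heA heB => ?_)
    induction e with
    | _ x y =>
      exact disjoint_left.1 hAB (mem_sym2_iff.1 heA x (by simp)) (mem_sym2_iff.1 heB x (by simp))
  rw [delta_eq_card_sub_card_edges, delta_eq_card_sub_card_edges, delta_eq_card_sub_card_edges,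
    hedges, card_union_of_disjoint hdisj, card_union_of_disjoint hAB]
  push_cast
  ring

lemma delta_insert_le_of_adj [DecidableEq V] {A : Finset V} {v a : V} (hv : v ∉ A) (ha : a ∈ A)
    (hadj : G.Adj v a) : delta G (insert v A) ≤ delta G A := by
  classical
  have hsub : insert s(v, a) {e ∈ A.sym2 | e ∈ G.edgeSet} ⊆
      {e ∈ (insert v A).sym2 | e ∈ G.edgeSet} :=
    insert_subset (by simp [ha, hadj]) (filter_subset_filter _ (sym2_mono (subset_insert _ _)))
  have hnew : s(v, a) ∉ {e ∈ A.sym2 | e ∈ G.edgeSet} := by simp [hv]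
  have := card_le_card hsub
  rw [card_insert_of_notMem hnew] at this
  rw [delta_eq_card_sub_card_edges, delta_eq_card_sub_card_edges, card_insert_of_notMem hv]
  omega

lemma delta_image [DecidableEq V'] (G' : SimpleGraph V') {f : V → V'} {S : Finset V}
    (hf : Set.InjOn f S) (hadj : ∀ a ∈ S, ∀ b ∈ S, (G'.Adj (f a) (f b) ↔ G.Adj a b)) :
    delta G' (S.image f) = delta G S := by
  have hbij : Set.BijOn f S (S.image f) := by
    rw [coe_image]
    exact hf.bijOn_image
  let iso : G.induce (S : Set V) ≃g G'.induce (S.image f : Set V') :=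
    ⟨hbij.equiv f, fun {a b} => hadj a a.2 b b.2⟩
  rw [delta, delta, card_image_of_injOn hf, Nat.card_congr iso.mapEdgeSet]

variable {G} in
lemma delta_pos_of_isAcyclic (hG : G.IsAcyclic) {S : Finset V} (hS : S.Nonempty) :
    0 < delta G S := by
  have : Nonempty (S : Set V) := hS.to_subtype
  obtain ⟨T, hle, -, hT⟩ :=
    (connected_top (V := (S : Set V))).exists_isTree_le_of_le_of_isAcyclic le_top (hG.induce S)
  have hcard := ((isTree_iff_connected_and_card).1 hT).2
  have hmono := Nat.card_mono (Set.toFinite T.edgeSet) (edgeSet_subset_edgeSet.2 hle)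
  have hcardS : Nat.card (S : Set V) = #S := by simp
  rw [delta]
  omega

lemma delta_pos_of_forall_fiber {ι : Type*} (c : V → ι)
    (hc : ∀ u v, G.Adj u v → c u = c v)
    (hfiber : ∀ S : Finset V, S.Nonempty → (∀ x ∈ S, ∀ y ∈ S, c x = c y) → 0 < delta G S)
    (S : Finset V) (hS : S.Nonempty) : 0 < delta G S := by
  classical
  induction S using Finset.strongInduction with
  | H S ih =>
  obtain ⟨x, hx⟩ := hS
  have hsplit : delta G S = delta G {y ∈ S | c y = c x} + delta G {y ∈ S | ¬ c y = c x} := by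
    conv_lhs => rw [← filter_union_filter_not_eq (fun y => c y = c x) S]
    refine delta_union_of_forall_not_adj G (disjoint_filter_filter_not _ _ _)
      fun a ha b hb hab => ?_
    exact (mem_filter.1 hb).2 ((hc a b hab).symm.trans (mem_filter.1 ha).2)
  have hfst : 0 < delta G {y ∈ S | c y = c x} :=
    hfiber _ ⟨x, mem_filter.2 ⟨hx, rfl⟩⟩ fun y hy z hz =>
      (mem_filter.1 hy).2.trans (mem_filter.1 hz).2.symm
  rcases ({y ∈ S | ¬ c y = c x} : Finset V).eq_empty_or_nonempty with hrest | hrest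
  · rw [hsplit, hrest, delta_eq_card_sub_card_edges G ∅]
    simpa using hfst
  · have := ih _ (filter_ssubset.2 ⟨x, hx, not_not.2 rfl⟩) hrest
    omega

end Predimension

section Closedness

variable {V : Type*} [DecidableEq V] {G : SimpleGraph V} {A : Finset V} {a v : V}

lemma Closed.mem_of_adj {B : Finset V} (h : Closed G A B) (ha : a ∈ A) (hvB : v ∈ B)
    (hav : G.Adj a v) : v ∈ A := by
  by_contra hvA
  exact (h.2 _ (ssubset_insert hvA) (insert_subset hvB h.1)).not_ge
    (delta_insert_le_of_adj G hvA ha hav.symm)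

lemma ClosedIn.mem_of_adj (h : ClosedIn G A) (ha : a ∈ A) (hav : G.Adj a v) : v ∈ A :=
  (h _ (subset_insert v A)).mem_of_adj ha (mem_insert_self v A) hav

lemma closedIn_of_forall_mem_of_adj (hG : G.IsAcyclic) (h : ∀ a ∈ A, ∀ v, G.Adj a v → v ∈ A) :
    ClosedIn G A := by
  refine fun B hAB => ⟨hAB, fun C hAC _ => ?_⟩
  have hsplit := delta_union_of_forall_not_adj G (disjoint_sdiff (s := A) (t := C))
    fun a ha b hb hab => (mem_sdiff.1 hb).2 (h a ha b hab)
  rw [union_sdiff_of_subset hAC.subset] at hsplit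
  have := delta_pos_of_isAcyclic hG (sdiff_nonempty.2 hAC.not_subset)
  omega

end Closedness

lemma SimpleGraph.Walk.apply_eq_of_mem_support {V ι : Type*} {G : SimpleGraph V} (c : V → ι)
    (hc : ∀ u v, G.Adj u v → c u = c v) {u v : V} (p : G.Walk u v) :
    ∀ z ∈ p.support, c z = c u := by
  induction p with
  | nil => simp
  | cons h p ih =>
    intro z hz
    rcases List.mem_cons.1 (support_cons h p ▸ hz) with rfl | hz
    · rfl
    · exact (ih z hz).trans (hc _ _ h).symm

lemma bot_boxProd_adj {ι W : Type*} {H : SimpleGraph W} {x y : ι × W} :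
    ((⊥ : SimpleGraph ι) □ H).Adj x y ↔ H.Adj x.2 y.2 ∧ x.1 = y.1 := by
  simp

section ClassK

variable {α : ℕ∞} {V W : Type*} [Fintype V] [Fintype W] {G : SimpleGraph V} {H : SimpleGraph W}

/-- `δ` is additive over the fibres of `c`, and neighbourhoods and paths lie inside one fibre. -/
lemma InK.of_fiberwise_embedding {ι : Type*} (c : V → ι) (π : V → W)
    (hc : ∀ u v, G.Adj u v → c u = c v) (hinj : ∀ u v, c u = c v → π u = π v → u = v)
    (hadj : ∀ u v, c u = c v → (H.Adj (π u) (π v) ↔ G.Adj u v)) (hH : InK α H univ) :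
    InK α G univ := by
  classical
  let hom : G →g H := ⟨π, fun {u v} huv => (hadj u v (hc u v huv)).2 huv⟩
  have hnbr : ∀ a (s : Finset V), (∀ b ∈ s, G.Adj a b) →
      Set.InjOn π s ∧ ∀ b ∈ s.image π, H.Adj (π a) b := by
    refine fun a s hs => ⟨fun x hx y hy => hinj x y ?_,
      by simpa using fun b hb => (hadj a b (hc a b (hs b hb))).2 (hs b hb)⟩
    exact (hc a x (hs x hx)).symm.trans (hc a y (hs y hy))
  refine ⟨fun S _ hS => delta_pos_of_forall_fiber G c hc (fun S hS hSc => ?_) S hS, fun n hn => ?_⟩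
  · rw [← delta_image G H (fun x hx y hy => hinj x y (hSc x hx y hy))
      fun x hx y hy => hadj x y (hSc x hx y hy)]
    exact hH.1 _ (subset_univ _) (hS.image π)
  · have hHn := hH.2 n hn
    split_ifs at hHn ⊢
    · intro a _ s _ hs
      rw [← card_image_of_injOn (hnbr a s hs).1]
      exact hHn (π a) (mem_univ _) _ (subset_univ _) (hnbr a s hs).2
    · rintro a - ⟨s, -, hs, hcard⟩ ⟨y, p, hp, hlen, -⟩
      have hpath : (p.map hom).IsPath := by
        rw [Walk.isPath_def, Walk.support_map]
        refine hp.support_nodup.map_on fun x hx y hy => hinj x y ?_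
        exact (p.apply_eq_of_mem_support c hc x hx).trans
          (p.apply_eq_of_mem_support c hc y hy).symm
      refine hHn (π a) (mem_univ _) ⟨s.image π, subset_univ _, (hnbr a s hs).2, ?_⟩
        ⟨π y, p.map hom, hpath, by rwa [Walk.length_map], fun _ _ => mem_univ _⟩
      rwa [card_image_of_injOn (hnbr a s hs).1]

lemma InK.of_embedding (f : G ↪g H) (hH : InK α H univ) : InK α G univ :=
  hH.of_fiberwise_embedding (fun _ => ()) f (fun _ _ _ => rfl) (fun _ _ _ h => f.injective h)
    fun _ _ _ => f.map_adj_iff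

lemma InK.bot_boxProd {ι : Type*} [Fintype ι] (hH : InK α H univ) :
    InK α ((⊥ : SimpleGraph ι) □ H) univ :=
  hH.of_fiberwise_embedding Prod.fst Prod.snd (fun _ _ h => (bot_boxProd_adj.1 h).2)
    (fun _ _ h₁ h₂ => Prod.ext h₁ h₂) fun x y h => by rw [bot_boxProd_adj]; tauto

end ClassK

structure IsIsolatedCopy {V W : Type*} (H : SimpleGraph W) (G : SimpleGraph V) (φ : W → V) :
    Prop where
  injective : Function.Injective φ
  adj_iff : ∀ u v, H.Adj u v ↔ G.Adj (φ u) (φ v)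
  mem_range_of_adj : ∀ w y, G.Adj (φ w) y → y ∈ Set.range φ

section Universality

variable {α : ℕ∞} {V W : Type*} {G : SimpleGraph V} [Fintype W] {H : SimpleGraph W}

lemma ModelsUniv.exists_isIsolatedCopy (hM : ModelsUniv α G) (hH : InK α H univ) :
    ∃ φ : W → V, IsIsolatedCopy H G φ := by
  let e := (Fintype.equivFin W).symm
  obtain ⟨g, hg, hgadj, hgiso⟩ :=
    hM.2.2 _ (H.comap e) (hH.of_embedding (Embedding.comap e.toEmbedding H))
  have hrange : Set.range (g ∘ e.symm) = Set.range g := e.symm.surjective.range_comp g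
  refine ⟨g ∘ e.symm, hg.comp e.symm.injective, fun u v => ?_, fun w y hy => ?_⟩
  · simpa using hgadj (e.symm u) (e.symm v)
  · by_contra hy'
    exact hgiso y (hrange ▸ hy') _ hy

/-- Taking `#A + 1` disjoint copies of `H` at once, one of them must miss `A`. -/
lemma ModelsUniv.exists_isIsolatedCopy_disjoint (hM : ModelsUniv α G) (hH : InK α H univ)
    (A : Finset V) : ∃ φ : W → V, IsIsolatedCopy H G φ ∧ ∀ w, φ w ∉ A := by
  obtain ⟨ψ, hψ, hψadj, hψiso⟩ :=
    hM.exists_isIsolatedCopy (hH.bot_boxProd (ι := Fin (#A + 1)))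
  obtain ⟨i, hi⟩ : ∃ i : Fin (#A + 1), ∀ w, ψ (i, w) ∉ A := by
    by_contra! hbad
    choose w hw using hbad
    have := card_le_card_of_injOn (s := univ) (fun i => ψ (i, w i)) (fun i _ => hw i)
      fun i _ i' _ h => congrArg Prod.fst (hψ h)
    simp at this
  refine ⟨fun w => ψ (i, w), ⟨fun w w' h => congrArg Prod.snd (hψ h), fun u v => ?_,
    fun w y hy => ?_⟩, hi⟩
  · rw [← hψadj, boxProd_adj_right]
  · obtain ⟨⟨i', w'⟩, rfl⟩ := hψiso _ _ hy
    obtain rfl : i = i' := (bot_boxProd_adj.1 ((hψadj _ _).2 hy)).2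
    exact ⟨w', rfl⟩

end Universality

/-- The map is `j⁻¹` on `j(A)` and `φ` elsewhere; the two pieces do not interact because `A`,
`j(A)` and the image of `φ` have no outside neighbours. -/
lemma exists_isIsolatedCopy_extending {V W : Type*} [DecidableEq W] {G : SimpleGraph V}
    {H : SimpleGraph W} {A : Finset V} {j : V → W} (hj : Set.InjOn j A)
    (hjadj : ∀ a a' : V, a ∈ A → a' ∈ A → (G.Adj a a' ↔ H.Adj (j a) (j a')))
    (hAG : ∀ a ∈ A, ∀ v, G.Adj a v → v ∈ A) (hAH : ∀ a ∈ A, ∀ w, H.Adj (j a) w → w ∈ A.image j)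
    {φ : W → V} (hφ : IsIsolatedCopy H G φ) (hφA : ∀ w, φ w ∉ A) :
    ∃ f : W → V, IsIsolatedCopy H G f ∧ ∀ a ∈ A, f (j a) = a := by
  let f w := if h : w ∈ A.image j then (mem_image.1 h).choose else φ w
  have hfj : ∀ a ∈ A, f (j a) = a := fun a ha => by
    have hmem := mem_image_of_mem j ha
    obtain ⟨hA, hj'⟩ := (mem_image.1 hmem).choose_spec
    simpa only [f, dif_pos hmem] using hj hA ha hj'
  have hfφ : ∀ w ∉ A.image j, f w = φ w := fun w hw => dif_neg hw
  have hfA : ∀ w, f w ∈ A ↔ w ∈ A.image j := fun w => by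
    by_cases hw : w ∈ A.image j
    · obtain ⟨a, ha, rfl⟩ := mem_image.1 hw
      simp only [hfj a ha, ha, hw]
    · simp only [hfφ w hw, hφA w, hw]
  have hcross : ∀ u v, u ∈ A.image j → v ∉ A.image j → ¬ H.Adj u v ∧ ¬ G.Adj (f u) (f v) := by
    rintro _ v hu hv
    obtain ⟨a, ha, rfl⟩ := mem_image.1 hu
    refine ⟨fun h => hv (hAH a ha v h), fun h => hv ((hfA v).1 (hAG a ha _ ?_))⟩
    rwa [hfj a ha] at h
  refine ⟨f, ⟨fun u v huv => ?_, fun u v => ?_, fun w y hy => ?_⟩, hfj⟩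
  · by_cases hu : u ∈ A.image j
    · have hv : v ∈ A.image j := (hfA v).1 (huv ▸ (hfA u).2 hu)
      obtain ⟨a, ha, rfl⟩ := mem_image.1 hu
      obtain ⟨b, hb, rfl⟩ := mem_image.1 hv
      rw [hfj a ha, hfj b hb] at huv
      rw [huv]
    · have hv : v ∉ A.image j := fun hv => hu ((hfA u).1 (huv ▸ (hfA v).2 hv))
      exact hφ.injective (by rwa [hfφ u hu, hfφ v hv] at huv)
  · by_cases hu : u ∈ A.image j <;> by_cases hv : v ∈ A.image j
    · obtain ⟨a, ha, rfl⟩ := mem_image.1 hu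
      obtain ⟨b, hb, rfl⟩ := mem_image.1 hv
      rw [hfj a ha, hfj b hb, hjadj a b ha hb]
    · exact iff_of_false (hcross u v hu hv).1 (hcross u v hu hv).2
    · exact iff_of_false (fun h => (hcross v u hv hu).1 h.symm)
        fun h => (hcross v u hv hu).2 h.symm
    · rw [hfφ u hu, hfφ v hv, hφ.adj_iff]
  · by_cases hw : w ∈ A.image j
    · obtain ⟨a, ha, rfl⟩ := mem_image.1 hw
      rw [hfj a ha] at hy
      exact ⟨j y, hfj y (hAG a ha y hy)⟩
    · rw [hfφ w hw] at hy
      obtain ⟨w', rfl⟩ := hφ.mem_range_of_adj w y hy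
      have hw' : w' ∉ A.image j := fun hw' => (hcross w' w hw' hw).1 ((hφ.adj_iff w w').2 hy).symm
      exact ⟨w', hfφ w' hw'⟩

/-- Let `α ∈ ω+1`, let `M` be a model of `Univ_α`, let `A` be a finite
set of vertices of `M` with `A ≤* M`, and let `B ∈ K_α` be a finite graph containing
`A` (as an induced subgraph, via `j`) with `A ≤* B`. Then there is an embedding `f`
of `B` into `M` fixing `A` pointwise whose image is closed in `M`. (In particular,
every model of `Univ_α` is ultra-homogeneous.) -/
theorem stmt_18 {V : Type*} [DecidableEq V] (α : ℕ∞) (G : SimpleGraph V)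
    (hM : ModelsUniv α G) (A : Finset V) (hA : ClosedIn G A)
    (W : Type*) [Fintype W] [DecidableEq W] (H : SimpleGraph W)
    (hH : InK α H Finset.univ)
    (j : V → W) (hj : Set.InjOn j (A : Set V))
    (hjadj : ∀ a a' : V, a ∈ A → a' ∈ A → (G.Adj a a' ↔ H.Adj (j a) (j a')))
    (hjclosed : Closed H (A.image j) Finset.univ) :
    ∃ f : W → V, Function.Injective f ∧
      (∀ a ∈ A, f (j a) = a) ∧
      (∀ u v : W, H.Adj u v ↔ G.Adj (f u) (f v)) ∧
      ClosedIn G (Finset.univ.image f) := by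
  obtain ⟨φ, hφ, hφA⟩ := hM.exists_isIsolatedCopy_disjoint hH A
  obtain ⟨f, hf, hfj⟩ := exists_isIsolatedCopy_extending hj hjadj
    (fun a ha v => hA.mem_of_adj ha)
    (fun a ha w => hjclosed.mem_of_adj (mem_image_of_mem j ha) (mem_univ w)) hφ hφA
  refine ⟨f, hf.injective, hfj, hf.adj_iff, closedIn_of_forall_mem_of_adj hM.1 ?_⟩
  intro _ hu v huv
  obtain ⟨w, -, rfl⟩ := mem_image.1 hu
  obtain ⟨w', rfl⟩ := hf.mem_range_of_adj w v huv
  exact mem_image_of_mem f (mem_univ w')
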